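/- arXiv:2004.00984 — 3 statements merged into one kernel-verified Lean document; each statement's English description precedes it below -/
import Mathlib

section
/- Let J be a compact interval, 0 < μ ≤ 1/2, γ = log 2 / log(1/μ), and m ≥ 0 an integer. Let C^mid_{μ,m}(J) be the set of midpoints of the 2^m intervals of the m-th generation of the standard middle-piece Cantor construction with ratio μ on J, and set δ_m = μ^m |J|. Then for every δ ∈ (0,|J|), N(C^mid_{μ,m}(J), δ) ≤ min(δ_m^{-γ}, 2δ^{-γ}) |J|^γ, with equality N = δ_m^{-γ}|J|^γ = 2^m when δ < δ_m. -/
/-- Minimal number of closed intervals of length `δ` needed to cover `E`. -/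
noncomputable def covN (E : Set ℝ) (δ : ℝ) : ℕ :=
  sInf {n : ℕ | ∃ c : Fin n → ℝ, E ⊆ ⋃ i, Set.Icc (c i) (c i + δ)}

/-- The set of midpoints of the `2^m` intervals of the `m`-th generation of the
middle-piece Cantor construction with ratio `μ` on the interval `[a, a+L]`. -/
noncomputable def cantorMid (μ a L : ℝ) (m : ℕ) : Set ℝ :=
  {x | ∃ σ : Fin m → Bool,
    x = a + L * (∑ i : Fin m, (if σ i then (1 - μ) * μ ^ (i : ℕ) else 0)) + μ ^ m * L / 2}

/-!
The midpoints are indexed by the addresses `σ ∈ {0,1}^m`. Midpoints whose addresses share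
their first `k` digits lie in one generation-`k` interval of length `μ^k |J|`, which gives
`N ≤ 2^k` as soon as `μ^k |J| ≤ δ`; distinct midpoints are at distance at least `δ_m`,
because the two generation-one intervals are `(1 - 2μ)|J| ≥ 0` apart, so no interval of
length `δ < δ_m` contains two of them and `N = 2^m`. Since `μ^{-γ} = 2`, we have
`2^k = (μ^k |J|)^{-γ} |J|^γ`, and choosing `k` with `μ^{k+1}|J| < δ ≤ μ^k |J|` turns
`N ≤ 2^{k+1}` into `N ≤ 2 δ^{-γ} |J|^γ`.
-/

open Set Finset

section CoveringNumber

variable {ι : Type*} {δ : ℝ}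

lemma exists_fin_cover_of_subset_iUnion [Fintype ι] {E : Set ℝ} (c : ι → ℝ)
    (hE : E ⊆ ⋃ i, Icc (c i) (c i + δ)) :
    ∃ c' : Fin (Fintype.card ι) → ℝ, E ⊆ ⋃ i, Icc (c' i) (c' i + δ) := by
  refine ⟨c ∘ (Fintype.equivFin ι).symm, fun x hx => ?_⟩
  obtain ⟨i, hi⟩ := mem_iUnion.1 (hE hx)
  exact mem_iUnion.2 ⟨Fintype.equivFin ι i, by simpa using hi⟩

lemma covN_le_card [Fintype ι] {E : Set ℝ} (c : ι → ℝ) (hE : E ⊆ ⋃ i, Icc (c i) (c i + δ)) :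
    covN E δ ≤ Fintype.card ι :=
  Nat.sInf_le (exists_fin_cover_of_subset_iUnion c hE)

lemma range_subset_iUnion_Icc (f : ι → ℝ) (hδ : 0 ≤ δ) :
    range f ⊆ ⋃ i, Icc (f i) (f i + δ) :=
  range_subset_iff.2 fun i => mem_iUnion.2 ⟨i, left_mem_Icc.2 (le_add_of_nonneg_right hδ)⟩

lemma covN_range_le_card [Fintype ι] (f : ι → ℝ) (hδ : 0 ≤ δ) : covN (range f) δ ≤ Fintype.card ι :=
  covN_le_card f (range_subset_iUnion_Icc f hδ)

/-- An interval of length `δ` contains at most one point of a `δ`-separated family. -/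
lemma covN_range_eq_card [Fintype ι] (f : ι → ℝ) (hδ : 0 ≤ δ)
    (hsep : Pairwise fun i j => δ < |f i - f j|) :
    covN (range f) δ = Fintype.card ι := by
  refine (covN_range_le_card f hδ).antisymm ?_
  obtain ⟨c, hc⟩ : ∃ c : Fin (covN (range f) δ) → ℝ, range f ⊆ ⋃ i, Icc (c i) (c i + δ) :=
    Nat.sInf_mem (s := {n | ∃ c : Fin n → ℝ, range f ⊆ ⋃ i, Icc (c i) (c i + δ)})
      ⟨Fintype.card ι, exists_fin_cover_of_subset_iUnion f (range_subset_iUnion_Icc f hδ)⟩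
  choose F hF using fun i => mem_iUnion.1 (hc (mem_range_self i))
  have hF_inj : Function.Injective F := by
    intro i j hij
    by_contra hne
    have hi := hF i
    have hj := hF j
    rw [hij] at hi
    have : |f i - f j| ≤ δ := abs_sub_le_iff.2 ⟨by linarith [hi.2, hj.1], by linarith [hi.1, hj.2]⟩
    exact (hsep hne).not_ge this
  simpa using Fintype.card_le_of_injective F hF_inj

end CoveringNumber

section CantorMidpoints

variable (μ a L : ℝ) {m : ℕ}

/-- The relative position `(left endpoint - a) / L` of the generation-`m` interval with
address `σ`. -/
noncomputable def cantorOffset (σ : Fin m → Bool) : ℝ :=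
  ∑ i, if σ i then (1 - μ) * μ ^ (i : ℕ) else 0

noncomputable def cantorMidpoint (σ : Fin m → Bool) : ℝ :=
  a + L * cantorOffset μ σ + μ ^ m * L / 2

lemma cantorMid_eq_range : cantorMid μ a L m = range (cantorMidpoint μ a L (m := m)) := by
  ext x
  exact exists_congr fun σ => eq_comm

lemma cantorOffset_add {k j : ℕ} (σ : Fin (k + j) → Bool) :
    cantorOffset μ σ = cantorOffset μ (fun i => σ (Fin.castAdd j i)) +
      μ ^ k * cantorOffset μ (fun i => σ (Fin.natAdd k i)) := by
  rw [cantorOffset, Fin.sum_univ_add, cantorOffset, cantorOffset, mul_sum]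
  congr 1
  refine sum_congr rfl fun i _ => ?_
  simp only [Fin.val_natAdd, pow_add]
  split_ifs <;> ring

lemma cantorMidpoint_add {k j : ℕ} (σ : Fin (k + j) → Bool) :
    cantorMidpoint μ a L σ =
      cantorMidpoint μ (a + L * cantorOffset μ (fun i => σ (Fin.castAdd j i))) (μ ^ k * L)
        (fun i => σ (Fin.natAdd k i)) := by
  simp only [cantorMidpoint, cantorOffset_add, pow_add]
  ring

lemma cantorOffset_succ (σ : Fin (m + 1) → Bool) :
    cantorOffset μ σ = (if σ 0 then 1 - μ else 0) + μ * cantorOffset μ (Fin.tail σ) := by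
  rw [cantorOffset, Fin.sum_univ_succ, cantorOffset, mul_sum]
  congr 1
  · simp
  · refine sum_congr rfl fun i _ => ?_
    by_cases h : σ i.succ
    · simp only [h, ↓reduceIte, Fin.tail, Fin.val_succ, pow_succ]
      ring
    · simp only [h, Bool.false_eq_true, ↓reduceIte, Fin.tail, mul_zero]

lemma cantorMidpoint_succ (σ : Fin (m + 1) → Bool) :
    cantorMidpoint μ a L σ =
      cantorMidpoint μ (a + if σ 0 then (1 - μ) * L else 0) (μ * L) (Fin.tail σ) := by
  simp only [cantorMidpoint, cantorOffset_succ, pow_succ]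
  split_ifs <;> ring

variable {μ}

lemma cantorOffset_nonneg (hμ0 : 0 ≤ μ) (hμ1 : μ ≤ 1) (σ : Fin m → Bool) :
    0 ≤ cantorOffset μ σ :=
  sum_nonneg fun i _ => by
    split_ifs
    exacts [mul_nonneg (sub_nonneg.2 hμ1) (pow_nonneg hμ0 _), le_rfl]

lemma cantorOffset_le (hμ0 : 0 ≤ μ) (hμ1 : μ ≤ 1) (σ : Fin m → Bool) :
    cantorOffset μ σ ≤ 1 - μ ^ m :=
  calc cantorOffset μ σ ≤ ∑ i : Fin m, (1 - μ) * μ ^ (i : ℕ) :=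
        sum_le_sum fun i _ => by
          split_ifs
          exacts [le_rfl, mul_nonneg (sub_nonneg.2 hμ1) (pow_nonneg hμ0 _)]
    _ = 1 - μ ^ m := by
      rw [Fin.sum_univ_eq_sum_range (fun i => (1 - μ) * μ ^ i), ← mul_sum, mul_comm,
        geom_sum_mul_neg]

lemma cantorMidpoint_mem_Icc (hμ0 : 0 ≤ μ) (hμ1 : μ ≤ 1) (hL : 0 ≤ L) (σ : Fin m → Bool) :
    cantorMidpoint μ a L σ ∈ Icc (a + μ ^ m * L / 2) (a + L - μ ^ m * L / 2) := by
  have h0 := mul_nonneg hL (cantorOffset_nonneg hμ0 hμ1 σ)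
  have h1 := mul_le_mul_of_nonneg_left (cantorOffset_le hμ0 hμ1 σ) hL
  constructor <;> simp only [cantorMidpoint] <;> nlinarith

/-- The two generation-one intervals are `(1 - 2μ) L ≥ 0` apart, and distinct addresses
first differ either in the first digit or, by induction, inside one of these intervals. -/
lemma le_abs_cantorMidpoint_sub (hμ0 : 0 ≤ μ) (hμ2 : μ ≤ 1 / 2) (hL : 0 ≤ L)
    {σ τ : Fin m → Bool} (hστ : σ ≠ τ) :
    μ ^ m * L ≤ |cantorMidpoint μ a L σ - cantorMidpoint μ a L τ| := by
  induction m generalizing a L with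
  | zero => exact absurd (Subsingleton.elim σ τ) hστ
  | succ m ih =>
    rw [cantorMidpoint_succ, cantorMidpoint_succ μ a L τ, pow_succ, mul_assoc]
    by_cases h0 : σ 0 = τ 0
    · have htail : Fin.tail σ ≠ Fin.tail τ := fun ht =>
        hστ (by rw [← Fin.cons_self_tail σ, ← Fin.cons_self_tail τ, h0, ht])
      rw [h0]
      exact ih _ _ (mul_nonneg hμ0 hL) htail
    · have hμL : 0 ≤ μ * L := mul_nonneg hμ0 hL
      have hσ := cantorMidpoint_mem_Icc (a + if σ 0 then (1 - μ) * L else 0) _ hμ0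
        (by linarith) hμL (Fin.tail σ)
      have hτ := cantorMidpoint_mem_Icc (a + if τ 0 then (1 - μ) * L else 0) _ hμ0
        (by linarith) hμL (Fin.tail τ)
      have hgap : μ * L ≤ (1 - μ) * L := by nlinarith
      obtain ⟨hσ0, hτ0⟩ | ⟨hσ0, hτ0⟩ : σ 0 = false ∧ τ 0 = true ∨ σ 0 = true ∧ τ 0 = false := by
        cases hσ : σ 0 <;> cases hτ : τ 0 <;> simp [hσ, hτ] at h0 ⊢
      all_goals simp only [hσ0, hτ0, Bool.false_eq_true, if_false, if_true] at hσ hτ ⊢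
      · rw [abs_sub_comm]
        exact le_abs.2 (Or.inl (by linarith [hσ.2, hτ.1]))
      · exact le_abs.2 (Or.inl (by linarith [hσ.1, hτ.2]))

end CantorMidpoints

section CoveringCantorMidpoints

variable {μ a L δ : ℝ} {m : ℕ}

lemma covN_cantorMid_le_two_pow_self (hδ : 0 ≤ δ) : covN (cantorMid μ a L m) δ ≤ 2 ^ m := by
  simpa [cantorMid_eq_range] using covN_range_le_card (cantorMidpoint μ a L (m := m)) hδ

lemma covN_cantorMid_eq_two_pow (hμ0 : 0 ≤ μ) (hμ2 : μ ≤ 1 / 2) (hL : 0 ≤ L) (hδ : 0 ≤ δ)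
    (hδm : δ < μ ^ m * L) : covN (cantorMid μ a L m) δ = 2 ^ m := by
  rw [cantorMid_eq_range, covN_range_eq_card _ hδ fun σ τ hστ =>
    hδm.trans_le (le_abs_cantorMidpoint_sub a L hμ0 hμ2 hL hστ)]
  simp

lemma covN_cantorMid_le_two_pow (hμ0 : 0 ≤ μ) (hμ1 : μ ≤ 1) (hL : 0 ≤ L) {k : ℕ}
    (hkm : k ≤ m) (hδ : μ ^ k * L ≤ δ) : covN (cantorMid μ a L m) δ ≤ 2 ^ k := by
  obtain ⟨j, rfl⟩ := Nat.exists_eq_add_of_le hkm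
  suffices cantorMid μ a L (k + j) ⊆
      ⋃ τ : Fin k → Bool, Icc (a + L * cantorOffset μ τ) (a + L * cantorOffset μ τ + δ) by
    simpa using covN_le_card _ this
  rw [cantorMid_eq_range]
  rintro _ ⟨σ, rfl⟩
  refine mem_iUnion.2 ⟨fun i => σ (Fin.castAdd j i), ?_⟩
  have hσ := cantorMidpoint_mem_Icc (a + L * cantorOffset μ (fun i => σ (Fin.castAdd j i)))
    _ hμ0 hμ1 (mul_nonneg (pow_nonneg hμ0 k) hL) (fun i => σ (Fin.natAdd k i))
  have hμj : 0 ≤ μ ^ j * (μ ^ k * L) := by positivity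
  rw [cantorMidpoint_add]
  constructor <;> linarith [hσ.1, hσ.2]

end CoveringCantorMidpoints

section Dimension

variable {μ γ L : ℝ}

lemma rpow_neg_log_two_div_log_inv (hμ0 : 0 < μ) (hμ1 : μ < 1) :
    μ ^ (-(Real.log 2 / Real.log (1 / μ))) = 2 := by
  have hlog : Real.log μ ≠ 0 := (Real.log_neg hμ0 hμ1).ne
  rw [Real.rpow_def_of_pos hμ0, one_div, Real.log_inv]
  convert Real.exp_log two_pos using 2
  field_simp

lemma pow_mul_rpow_neg_mul_rpow (h2 : μ ^ (-γ) = 2) (hμ : 0 ≤ μ) (hL : 0 < L) (j : ℕ) :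
    (μ ^ j * L) ^ (-γ) * L ^ γ = 2 ^ j := by
  have hμj : (μ ^ j) ^ (-γ) = (2 : ℝ) ^ j := by
    rw [← Real.rpow_natCast, ← Real.rpow_mul hμ, mul_comm, Real.rpow_mul hμ, h2,
      Real.rpow_natCast]
  rw [Real.mul_rpow (pow_nonneg hμ j) hL.le, hμj, mul_assoc, ← Real.rpow_add hL,
    neg_add_cancel, Real.rpow_zero, mul_one]

lemma two_pow_le_rpow_neg_mul_rpow (hγ : 0 ≤ γ) (h2 : μ ^ (-γ) = 2) (hμ : 0 ≤ μ)
    (hL : 0 < L) {δ : ℝ} (hδ : 0 < δ) {j : ℕ} (hδj : δ ≤ μ ^ j * L) :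
    (2 : ℝ) ^ j ≤ δ ^ (-γ) * L ^ γ := by
  rw [← pow_mul_rpow_neg_mul_rpow h2 hμ hL j]
  exact mul_le_mul_of_nonneg_right (Real.rpow_le_rpow_of_nonpos hδ hδj (neg_nonpos.2 hγ))
    (Real.rpow_nonneg hL.le γ)

end Dimension

lemma covN_cantorMid_le_two_mul_rpow {μ a L γ δ : ℝ} {m : ℕ} (hμ0 : 0 < μ) (hμ1 : μ < 1)
    (hL : 0 < L) (hγ : 0 ≤ γ) (h2 : μ ^ (-γ) = 2) (hδ : 0 < δ) (hδL : δ ≤ L) :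
    (covN (cantorMid μ a L m) δ : ℝ) ≤ 2 * δ ^ (-γ) * L ^ γ := by
  obtain ⟨n, hn1, hn⟩ := exists_nat_pow_near_of_lt_one (div_pos hδ hL)
    ((div_le_one hL).2 hδL) hμ0 hμ1
  rw [lt_div_iff₀ hL] at hn1
  rw [div_le_iff₀ hL] at hn
  have hpow : ∀ j : ℕ, δ ≤ μ ^ j * L → (2 : ℝ) ^ j ≤ δ ^ (-γ) * L ^ γ := fun _ =>
    two_pow_le_rpow_neg_mul_rpow hγ h2 hμ0.le hL hδ
  rcases le_or_gt (n + 1) m with hnm | hmn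
  · calc (covN (cantorMid μ a L m) δ : ℝ) ≤ 2 ^ (n + 1) := by
          exact_mod_cast covN_cantorMid_le_two_pow hμ0.le hμ1.le hL.le hnm hn1.le
      _ = 2 * 2 ^ n := pow_succ' 2 n
      _ ≤ 2 * δ ^ (-γ) * L ^ γ := by rw [mul_assoc]; gcongr; exact hpow n hn
  · have hδm : δ ≤ μ ^ m * L :=
      hn.trans (mul_le_mul_of_nonneg_right
        (pow_le_pow_of_le_one hμ0.le hμ1.le (Nat.lt_succ_iff.1 hmn)) hL.le)
    calc (covN (cantorMid μ a L m) δ : ℝ) ≤ 2 ^ m := by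
          exact_mod_cast covN_cantorMid_le_two_pow_self hδ.le
      _ ≤ δ ^ (-γ) * L ^ γ := hpow m hδm
      _ ≤ 2 * δ ^ (-γ) * L ^ γ := by
          rw [mul_assoc]
          linarith [show 0 ≤ δ ^ (-γ) * L ^ γ by positivity]

/-- Covering-number bound for the midpoint set: for `δ ∈ (0,|J|)`,
`N(C^mid_{μ,m}(J), δ) ≤ min(δ_m^{-γ}, 2 δ^{-γ}) |J|^γ`, with equality
`N = δ_m^{-γ} |J|^γ = 2^m` when `δ < δ_m`, where `δ_m = μ^m |J|` and
`γ = log 2 / log (1/μ)`. -/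
theorem stmt4 (μ : ℝ) (hμ : 0 < μ) (hμ2 : μ ≤ 1/2) (a L : ℝ) (hL : 0 < L) (m : ℕ)
    (γ : ℝ) (hγ : γ = Real.log 2 / Real.log (1/μ))
    (δ : ℝ) (hδ : 0 < δ) (hδL : δ < L) :
    (covN (cantorMid μ a L m) δ : ℝ) ≤ min ((μ ^ m * L) ^ (-γ)) (2 * δ ^ (-γ)) * L ^ γ ∧
    (δ < μ ^ m * L →
      (covN (cantorMid μ a L m) δ : ℝ) = (μ ^ m * L) ^ (-γ) * L ^ γ ∧
      (covN (cantorMid μ a L m) δ : ℝ) = 2 ^ m) := by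
  have hμ1 : μ < 1 := by linarith
  have hγ0 : 0 ≤ γ :=
    hγ ▸ div_nonneg (Real.log_nonneg one_le_two) (Real.log_nonneg (one_le_one_div hμ hμ1.le))
  have h2 : μ ^ (-γ) = 2 := hγ ▸ rpow_neg_log_two_div_log_inv hμ hμ1
  have hgen : (μ ^ m * L) ^ (-γ) * L ^ γ = 2 ^ m := pow_mul_rpow_neg_mul_rpow h2 hμ.le hL m
  refine ⟨?_, fun hδm => ?_⟩
  · rw [min_mul_of_nonneg _ _ (by positivity), hgen]
    exact le_min (by exact_mod_cast covN_cantorMid_le_two_pow_self hδ.le)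
      (covN_cantorMid_le_two_mul_rpow hμ hμ1 hL hγ0 h2 hδ hδL.le)
  · have hN : (covN (cantorMid μ a L m) δ : ℝ) = 2 ^ m := by
      exact_mod_cast covN_cantorMid_eq_two_pow hμ.le hμ2 hL.le hδ.le hδm
    exact ⟨hN.trans hgen.symm, hN⟩
end

section
/- For α ∈ (0,1), with J_n = [1 + 2^{-2^n - 1}, 1 + 2^{-2^n}] and n_0 the smallest nonnegative integer with α 2^{n_0} ≥ 1, the following holds for every interval I ⊆ [1,2]: the sum over all n ≥ n_0 with |J_n| ≤ |I| of |J_n|^α is at most 4 |I|^α. -/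
/-!
Write `|J_n| = 2^(-2^n - 1)`. Once `α 2^m ≥ 1`, the exponent `α 2^n` grows by at least
`n - m` between `m` and `n`, so `|J_n|^α ≤ |J_m|^α 2^(-(n - m))` for `n ≥ m ≥ n₀`. Starting
the geometric series at the first admissible index `m`, whose interval satisfies `|J_m| ≤ |I|`,
bounds the sum by `2 |I|^α`.
-/

open Set

noncomputable def jLength (n : ℕ) : ℝ := 2 ^ (-(2 : ℝ) ^ n - 1)

lemma jLength_nonneg (n : ℕ) : 0 ≤ jLength n := by
  unfold jLength; positivity

lemma natCast_le_mul_two_pow_add_sub {α : ℝ} {m : ℕ} (hm : 1 ≤ α * 2 ^ m) (k : ℕ) :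
    (k : ℝ) ≤ α * (2 ^ (m + k) - 2 ^ m) := by
  have hk : (k : ℝ) + 1 ≤ 2 ^ k := by exact_mod_cast Nat.lt_two_pow_self
  have hk' : (1 : ℝ) ≤ 2 ^ k := one_le_pow₀ one_le_two
  calc (k : ℝ) ≤ 1 * (2 ^ k - 1) := by linarith
    _ ≤ α * 2 ^ m * (2 ^ k - 1) := by gcongr
    _ = α * (2 ^ (m + k) - 2 ^ m) := by ring

lemma jLength_add_rpow_le {α : ℝ} {m : ℕ} (hm : 1 ≤ α * 2 ^ m) (k : ℕ) :
    jLength (m + k) ^ α ≤ jLength m ^ α * (1 / 2) ^ k := by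
  have h2 : (0 : ℝ) < 2 := two_pos
  have hhalf : ((1 : ℝ) / 2) ^ k = 2 ^ (-(k : ℝ)) := by
    rw [Real.rpow_neg h2.le, Real.rpow_natCast, one_div, inv_pow]
  have hexp := natCast_le_mul_two_pow_add_sub hm k
  unfold jLength
  rw [hhalf, ← Real.rpow_mul h2.le, ← Real.rpow_mul h2.le, ← Real.rpow_add h2]
  exact Real.rpow_le_rpow_of_exponent_le one_le_two (by nlinarith)

lemma summable_indicator_and_tsum_le_of_le_geometric {f : ℕ → ℝ} (hf : ∀ n, 0 ≤ f n)
    {S : Set ℕ} {m : ℕ} (hS : S ⊆ Ici m) {C : ℝ} (hle : ∀ k, f (m + k) ≤ C * (1 / 2) ^ k) :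
    Summable (S.indicator f) ∧ ∑' n, S.indicator f n ≤ 2 * C := by
  set g := S.indicator f
  have hg : ∀ k, g (k + m) ≤ C * (1 / 2) ^ k := fun k =>
    (indicator_le_self' fun n _ => hf n) _ |>.trans (add_comm k m ▸ hle k)
  have hgeom : Summable fun k : ℕ => C * (1 / 2 : ℝ) ^ k :=
    (summable_geometric_of_lt_one (by norm_num) (by norm_num)).mul_left C
  have hshift : Summable fun k => g (k + m) :=
    .of_nonneg_of_le (fun _ => indicator_nonneg (fun n _ => hf n) _) hg hgeom
  have hsum : Summable g := (summable_nat_add_iff m).mp hshift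
  have hhead : ∑ i ∈ Finset.range m, g i = 0 := Finset.sum_eq_zero fun i hi =>
    indicator_of_notMem (fun hiS => (Finset.mem_range.mp hi).not_ge (hS hiS)) _
  refine ⟨hsum, ?_⟩
  calc ∑' n, g n = ∑' k, g (k + m) := by
        rw [← hsum.sum_add_tsum_nat_add m, hhead, zero_add]
    _ ≤ ∑' k : ℕ, C * (1 / 2 : ℝ) ^ k := hshift.tsum_le_tsum hg hgeom
    _ = 2 * C := by
        rw [tsum_mul_left, tsum_geometric_of_lt_one (by norm_num) (by norm_num)]
        ring

theorem stmt9_general (α : ℝ) (h0 : 0 < α) (n0 : ℕ)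
    (hn0 : 1 ≤ α * 2 ^ n0)
    (x y : ℝ) (hxy : x ≤ y) :
    Summable (fun n : ℕ =>
      Set.indicator {n : ℕ | n0 ≤ n ∧ (2:ℝ) ^ (-((2:ℝ) ^ n) - 1) ≤ y - x}
        (fun n => ((2:ℝ) ^ (-((2:ℝ) ^ n) - 1)) ^ α) n) ∧
    (∑' n : ℕ,
      Set.indicator {n : ℕ | n0 ≤ n ∧ (2:ℝ) ^ (-((2:ℝ) ^ n) - 1) ≤ y - x}
        (fun n => ((2:ℝ) ^ (-((2:ℝ) ^ n) - 1)) ^ α) n) ≤ 4 * (y - x) ^ α := by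
  change Summable ({n | n0 ≤ n ∧ jLength n ≤ y - x}.indicator (jLength · ^ α)) ∧
    ∑' n, {n | n0 ≤ n ∧ jLength n ≤ y - x}.indicator (jLength · ^ α) n
      ≤ 4 * (y - x) ^ α
  set S := {n | n0 ≤ n ∧ jLength n ≤ y - x}
  have hI : 0 ≤ (y - x) ^ α := Real.rpow_nonneg (sub_nonneg.mpr hxy) α
  rcases S.eq_empty_or_nonempty with hS | hS
  · simp only [hS, indicator_empty, summable_zero, tsum_zero, true_and]
    linarith
  obtain ⟨hn0m, hmI⟩ : sInf S ∈ S := Nat.sInf_mem hS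
  have hm : 1 ≤ α * 2 ^ sInf S :=
    hn0.trans (by gcongr; exact one_le_two)
  have hle (k : ℕ) : jLength (sInf S + k) ^ α ≤ (y - x) ^ α * (1 / 2) ^ k :=
    (jLength_add_rpow_le hm k).trans (by gcongr; exact jLength_nonneg _)
  obtain ⟨hsum, htsum⟩ := summable_indicator_and_tsum_le_of_le_geometric
    (fun n => Real.rpow_nonneg (jLength_nonneg n) α) (fun n hn => Nat.sInf_le hn) hle
  exact ⟨hsum, htsum.trans (by linarith)⟩

/-- For `α ∈ (0,1)`, with `|J_n| = 2^{-2^n - 1}` and `n₀` the smallest nonnegative integer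
such that `α 2^{n₀} ≥ 1`, for every interval `I = [x,y] ⊆ [1,2]` the sum over all `n ≥ n₀`
with `|J_n| ≤ |I|` of `|J_n|^α` is at most `4 |I|^α`. -/
theorem stmt9 (α : ℝ) (h0 : 0 < α) (h1 : α < 1) (n0 : ℕ)
    (hn0 : 1 ≤ α * 2 ^ n0) (hmin : ∀ k : ℕ, k < n0 → α * 2 ^ k < 1)
    (x y : ℝ) (hx : 1 ≤ x) (hy : y ≤ 2) (hxy : x ≤ y) :
    Summable (fun n : ℕ =>
      Set.indicator {n : ℕ | n0 ≤ n ∧ (2:ℝ) ^ (-((2:ℝ) ^ n) - 1) ≤ y - x}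
        (fun n => ((2:ℝ) ^ (-((2:ℝ) ^ n) - 1)) ^ α) n) ∧
    (∑' n : ℕ,
      Set.indicator {n : ℕ | n0 ≤ n ∧ (2:ℝ) ^ (-((2:ℝ) ^ n) - 1) ≤ y - x}
        (fun n => ((2:ℝ) ^ (-((2:ℝ) ^ n) - 1)) ^ α) n) ≤ 4 * (y - x) ^ α :=
  stmt9_general α h0 n0 hn0 x y hxy
end

section
/- Let ξ, θ ∈ ℝ² with |θ| = 1 and τ(ρ) = |ξ − ρθ| + ρ. For every integer N ≥ 1 there exist real coefficients a_{0,N}, …, a_{N,N} with Σ_{k=0}^N a_{k,N} = 0 such that, writing v = ξ − ρθ and w = ⟨v,θ⟩/|v|, one has τ^{(N)}(ρ) = |v|^{-(N-1)} Σ_{k=0}^N a_{k,N} w^k whenever v ≠ 0. -/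
open scoped RealInnerProductSpace
open Polynomial

/-!
Write `r = ‖ξ - ρθ‖` and `w = ⟪ξ - ρθ, θ⟫ / r`. Away from `r = 0` one has `r' = -w` and,
because `‖θ‖ = 1`, `w' = (w² - 1) / r`. Hence the derivative of `r⁻ⁿ P(w)` is again of the
form `r⁻ⁿ⁻¹ Q(w)` with `Q = n X P + (X² - 1) P'`. Starting from `τ' = 1 - w`, the coefficients
`a_{k,N}` are those of a polynomial sequence, and their sum, the value at `1`, vanishes
since `1 - X` and `X² - 1` both vanish there.
-/

theorem HasDerivAt.norm {F : Type*} [NormedAddCommGroup F] [InnerProductSpace ℝ F]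
    {f : ℝ → F} {f' : F} {x : ℝ} (hf : HasDerivAt f f' x) (h0 : f x ≠ 0) :
    HasDerivAt (fun y => ‖f y‖) (⟪f x, f'⟫ / ‖f x‖) x := by
  have h := hf.norm_sq.sqrt (by positivity)
  simp only [Real.sqrt_sq (norm_nonneg _)] at h
  convert h using 1
  field_simp

theorem Polynomial.eval_eq_sum_fin {R : Type*} [Semiring R] {p : R[X]} {n : ℕ}
    (hn : p.natDegree < n) (x : R) : p.eval x = ∑ i : Fin n, p.coeff i * x ^ (i : ℕ) := by
  rw [eval_eq_sum_range' hn, Fin.sum_univ_eq_sum_range (fun i => p.coeff i * x ^ i)]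

/-- `tauPoly n = ∑ₖ a_{k,n+1} Xᵏ`, indexed so that `N = n + 1`. -/
noncomputable def tauPoly : ℕ → ℝ[X]
  | 0 => 1 - X
  | n + 1 => C (n : ℝ) * X * tauPoly n + (X ^ 2 - 1) * derivative (tauPoly n)

theorem natDegree_tauPoly_le (n : ℕ) : (tauPoly n).natDegree ≤ n + 1 := by
  induction n with
  | zero => simpa [tauPoly] using natDegree_sub_le (1 : ℝ[X]) X
  | succ n ih =>
    rw [tauPoly]
    refine natDegree_add_le_of_degree_le ?_ ?_
    · refine (natDegree_mul_le).trans ?_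
      have := (natDegree_C_mul_le (n : ℝ) X).trans natDegree_X_le
      omega
    · refine (natDegree_mul_le).trans ?_
      have h2 : (X ^ 2 - 1 : ℝ[X]).natDegree ≤ 2 := (natDegree_sub_le _ _).trans (by simp)
      have := natDegree_derivative_le (tauPoly n)
      omega

theorem eval_one_tauPoly (n : ℕ) : (tauPoly n).eval 1 = 0 := by
  induction n with
  | zero => simp [tauPoly]
  | succ n ih => simp [tauPoly, ih]

section Line

variable {E : Type*} [NormedAddCommGroup E] [InnerProductSpace ℝ E] {ξ θ : E} {ρ : ℝ}

theorem hasDerivAt_norm_sub_smul (hρ : ξ - ρ • θ ≠ 0) :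
    HasDerivAt (fun s : ℝ => ‖ξ - s • θ‖) (-(⟪ξ - ρ • θ, θ⟫ / ‖ξ - ρ • θ‖)) ρ := by
  have hv : HasDerivAt (fun s : ℝ => ξ - s • θ) (-θ) ρ := by
    simpa using ((hasDerivAt_id ρ).smul_const θ).const_sub ξ
  simpa [inner_neg_right, neg_div] using hv.norm hρ

theorem hasDerivAt_inner_sub_smul_div_norm (hθ : ‖θ‖ = 1) (hρ : ξ - ρ • θ ≠ 0) :
    HasDerivAt (fun s : ℝ => ⟪ξ - s • θ, θ⟫ / ‖ξ - s • θ‖)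
      (((⟪ξ - ρ • θ, θ⟫ / ‖ξ - ρ • θ‖) ^ 2 - 1) / ‖ξ - ρ • θ‖) ρ := by
  have hr : ‖ξ - ρ • θ‖ ≠ 0 := norm_ne_zero_iff.mpr hρ
  have hinner : HasDerivAt (fun s : ℝ => ⟪ξ - s • θ, θ⟫) (-1) ρ := by
    have := ((hasDerivAt_id ρ).const_sub ⟪ξ, θ⟫)
    simpa [inner_sub_left, real_inner_smul_left, hθ] using this
  refine (hinner.fun_div (hasDerivAt_norm_sub_smul hρ) hr).congr_deriv ?_
  field_simp
  ring

theorem hasDerivAt_zpow_norm_mul_eval (hθ : ‖θ‖ = 1) (hρ : ξ - ρ • θ ≠ 0) (m : ℤ) (P : ℝ[X]) :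
    HasDerivAt (fun s : ℝ => ‖ξ - s • θ‖ ^ m * P.eval (⟪ξ - s • θ, θ⟫ / ‖ξ - s • θ‖))
      (‖ξ - ρ • θ‖ ^ (m - 1) * (C (-m : ℝ) * X * P + (X ^ 2 - 1) * derivative P).eval
        (⟪ξ - ρ • θ, θ⟫ / ‖ξ - ρ • θ‖)) ρ := by
  have hr : ‖ξ - ρ • θ‖ ≠ 0 := norm_ne_zero_iff.mpr hρ
  have hpow := (hasDerivAt_zpow m _ (Or.inl hr)).comp ρ (hasDerivAt_norm_sub_smul hρ)
  have heval := (P.hasDerivAt _).comp ρ (hasDerivAt_inner_sub_smul_div_norm hθ hρ)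
  refine (hpow.fun_mul heval).congr_deriv ?_
  simp only [Function.comp_apply, eval_add, eval_mul, eval_sub, eval_pow, eval_C, eval_X, eval_one]
  rw [zpow_sub_one₀ hr]
  field_simp

theorem iteratedDeriv_succ_norm_sub_smul_add (hθ : ‖θ‖ = 1) (n : ℕ) (hρ : ξ - ρ • θ ≠ 0) :
    iteratedDeriv (n + 1) (fun s : ℝ => ‖ξ - s • θ‖ + s) ρ =
      ‖ξ - ρ • θ‖ ^ (-(n : ℤ)) * (tauPoly n).eval (⟪ξ - ρ • θ, θ⟫ / ‖ξ - ρ • θ‖) := by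
  induction n generalizing ρ with
  | zero =>
    rw [iteratedDeriv_one, ((hasDerivAt_norm_sub_smul hρ).fun_add (hasDerivAt_id' ρ)).deriv]
    simp only [CharP.cast_eq_zero, neg_zero, zpow_zero, tauPoly, eval_sub, eval_one, eval_X,
      one_mul]
    ring
  | succ n ih =>
    have hopen : IsOpen {s : ℝ | ξ - s • θ ≠ 0} :=
      isOpen_ne_fun (by fun_prop) continuous_const
    have hloc : iteratedDeriv (n + 1) (fun s : ℝ => ‖ξ - s • θ‖ + s) =ᶠ[nhds ρ]
        fun s => ‖ξ - s • θ‖ ^ (-(n : ℤ)) * (tauPoly n).eval (⟪ξ - s • θ, θ⟫ / ‖ξ - s • θ‖) :=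
      Filter.eventually_of_mem (hopen.mem_nhds hρ) fun s hs => ih hs
    rw [iteratedDeriv_succ, hloc.deriv_eq,
      (hasDerivAt_zpow_norm_mul_eval hθ hρ _ (tauPoly n)).deriv, tauPoly]
    push_cast
    ring_nf

end Line

/-- For `ξ, θ ∈ ℝ²` with `|θ| = 1` and `τ(ρ) = |ξ − ρθ| + ρ`: for every `N ≥ 1` there
exist coefficients `a_{0,N}, …, a_{N,N}` summing to zero such that, with `v = ξ − ρθ`
and `w = ⟨v,θ⟩/|v|`, one has `τ^{(N)}(ρ) = |v|^{-(N-1)} Σ_{k=0}^N a_{k,N} w^k`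
whenever `v ≠ 0`. -/
theorem stmt13 (ξ θ : EuclideanSpace ℝ (Fin 2)) (hθ : ‖θ‖ = 1) (N : ℕ) (hN : 1 ≤ N) :
    ∃ a : Fin (N + 1) → ℝ, (∑ k, a k = 0) ∧
      ∀ ρ : ℝ, ξ - ρ • θ ≠ 0 →
        iteratedDeriv N (fun s : ℝ => ‖ξ - s • θ‖ + s) ρ =
          ‖ξ - ρ • θ‖ ^ (1 - (N : ℤ)) *
            ∑ k : Fin (N + 1),
              a k * (⟪ξ - ρ • θ, θ⟫ / ‖ξ - ρ • θ‖) ^ (k : ℕ) := by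
  obtain ⟨n, rfl⟩ := Nat.exists_eq_add_of_le' hN
  have hdeg : (tauPoly n).natDegree < n + 1 + 1 := Nat.lt_succ_of_le (natDegree_tauPoly_le n)
  refine ⟨fun k => (tauPoly n).coeff k, ?_, fun ρ hρ => ?_⟩
  · simpa [eval_one_tauPoly] using (eval_eq_sum_fin hdeg 1).symm
  · rw [iteratedDeriv_succ_norm_sub_smul_add hθ n hρ, ← eval_eq_sum_fin hdeg]
    congr 2
    push_cast
    ring
end
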